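/- arXiv:1009.4389 — 2 statements merged into one kernel-verified Lean document; each statement's English description precedes it below -/
import Mathlib

section
/- Let δ > 0, 0 < β < δ, θ > 0, τ > 0, and let (a_k)_{k∈ℤ_+^d} and (b_k)_{k∈ℤ_+^d} be nonnegative sequences with b_k ≤ M (∑_{s∈ℤ_+^d} (2^{-δ|(k-s)_+|_1} a_s)^τ)^{1/τ} for all k, where (k-s)_+ denotes coordinatewise positive part. Then (∑_k (2^{β|k|_1} b_k)^θ)^{1/θ} ≤ C M (∑_k (2^{β|k|_1} a_k)^θ)^{1/θ} with C depending only on β, δ, θ, τ, d. -/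
/-!
Put `ρ = min τ θ` and `p = θ / ρ ≥ 1`. Since `ℓ^ρ ⊆ ℓ^τ` contractively, `b_k^ρ` is bounded by
`M^ρ ∑_s 2^{-δρ|(k-s)_+|_1} a_s^ρ`, so it suffices to bound this positive operator on the weighted
`ℓ^p` space with weight `2^{βρ|k|_1}`. Conjugating by the weight turns it into the kernel
`2^{βρ(|k|_1 - |s|_1) - δρ|(k-s)_+|_1}`, which is at most `q^{|k-s|_1}` with
`q = 2^{-ρ min(β, δ-β)} < 1` because `β < δ`; its row and column sums are thus at most
`(2/(1-q))^d`, and Schur's test concludes. Everything is computed in `ℝ≥0∞`, where all sums exist,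
and transferred back to `ℝ` only at the end.
-/

open scoped ENNReal
open Finset

namespace ENNReal

theorem tsum_fin_pi_prod {β : Type*} : ∀ {n : ℕ} (g : Fin n → β → ℝ≥0∞),
    ∑' f : Fin n → β, ∏ i, g i (f i) = ∏ i, ∑' b, g i b
  | 0, g => by simp
  | n + 1, g => by
    rw [← (Fin.consEquiv fun _ => β).tsum_eq, ENNReal.tsum_prod', Fin.prod_univ_succ]
    simp [Fin.consEquiv, Fin.prod_univ_succ, ENNReal.tsum_mul_left, ENNReal.tsum_mul_right,
      tsum_fin_pi_prod]

theorem tsum_pow_dist_le {q : ℝ≥0∞} (hq : q ≤ 1) (m : ℕ) :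
    ∑' n, q ^ Nat.dist m n ≤ 2 * (1 - q)⁻¹ := by
  rw [← Summable.sum_add_tsum_nat_add' (k := m) ENNReal.summable, two_mul,
    ← ENNReal.tsum_geometric]
  refine add_le_add ?_ (le_of_eq (tsum_congr fun n => ?_))
  · calc ∑ n ∈ range m, q ^ Nat.dist m n ≤ ∑ n ∈ range m, q ^ (m - 1 - n) :=
          sum_le_sum fun n hn => pow_le_pow_right_of_le_one' hq (by
            simp only [mem_range] at hn; unfold Nat.dist; omega)
      _ = ∑ j ∈ range m, q ^ j := sum_range_reflect (q ^ ·) m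
      _ ≤ ∑' j, q ^ j := ENNReal.sum_le_tsum _
  · rw [Nat.dist_eq_sub_of_le (by omega), Nat.add_sub_cancel]

theorem tsum_pow_sum_dist_le {d : ℕ} {q : ℝ≥0∞} (hq : q ≤ 1) (k : Fin d → ℕ) :
    ∑' s : Fin d → ℕ, q ^ ∑ i, Nat.dist (k i) (s i) ≤ (2 * (1 - q)⁻¹) ^ d := by
  simp_rw [← prod_pow_eq_pow_sum]
  rw [tsum_fin_pi_prod fun i n => q ^ Nat.dist (k i) n]
  calc ∏ i, ∑' n, q ^ Nat.dist (k i) n ≤ ∏ _i : Fin d, 2 * (1 - q)⁻¹ :=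
        prod_le_prod' fun i _ => tsum_pow_dist_le hq (k i)
    _ = (2 * (1 - q)⁻¹) ^ d := by simp

theorem rpow_eq_mul_rpow_sub_one (x : ℝ≥0∞) {r : ℝ} (hr : 1 ≤ r) : x ^ r = x * x ^ (r - 1) := by
  conv_lhs => rw [← add_sub_cancel 1 r]
  rw [ENNReal.rpow_add_of_nonneg _ _ zero_le_one (by linarith), ENNReal.rpow_one]

theorem tsum_rpow_le_rpow_tsum {ι : Type*} (y : ι → ℝ≥0∞) {r : ℝ} (hr : 1 ≤ r) :
    ∑' i, y i ^ r ≤ (∑' i, y i) ^ r := by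
  calc ∑' i, y i ^ r = ∑' i, y i * y i ^ (r - 1) := by simp_rw [rpow_eq_mul_rpow_sub_one _ hr]
    _ ≤ ∑' i, y i * (∑' j, y j) ^ (r - 1) := by
        gcongr with i
        exact ENNReal.le_tsum i
    _ = (∑' i, y i) ^ r := by rw [ENNReal.tsum_mul_right, ← rpow_eq_mul_rpow_sub_one _ hr]

theorem tsum_rpow_rpow_le {ι : Type*} (x : ι → ℝ≥0∞) {ρ τ : ℝ} (hρ : 0 < ρ) (hρτ : ρ ≤ τ) :
    (∑' i, x i ^ τ) ^ (1 / τ) ≤ (∑' i, x i ^ ρ) ^ (1 / ρ) := by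
  have hτ : 0 < τ := hρ.trans_le hρτ
  calc (∑' i, x i ^ τ) ^ (1 / τ) = (∑' i, (x i ^ ρ) ^ (τ / ρ)) ^ (1 / τ) := by
        simp_rw [← ENNReal.rpow_mul, mul_div_cancel₀ τ hρ.ne']
    _ ≤ ((∑' i, x i ^ ρ) ^ (τ / ρ)) ^ (1 / τ) := by
        gcongr
        exact tsum_rpow_le_rpow_tsum _ ((one_le_div hρ).mpr hρτ)
    _ = (∑' i, x i ^ ρ) ^ (1 / ρ) := by
        rw [← ENNReal.rpow_mul]
        congr 1
        field_simp

theorem tsum_mul_rpow_le {ι : Type*} (w v : ι → ℝ≥0∞) {p : ℝ} (hp : 1 ≤ p) {A : ℝ≥0∞}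
    (hA : ∑' i, w i ≤ A) :
    (∑' i, w i * v i) ^ p ≤ A ^ (p - 1) * ∑' i, w i * v i ^ p := by
  have hp0 : 0 < p := zero_lt_one.trans_le hp
  have holder : ∑' i, w i * v i ≤ A ^ (1 - p⁻¹) * (∑' i, w i * v i ^ p) ^ p⁻¹ :=
    ENNReal.summable.tsum_le_of_sum_le fun s =>
      (ENNReal.inner_le_weight_mul_Lp_of_nonneg s hp w v).trans (by
        gcongr
        · exact sub_nonneg.mpr (inv_le_one_of_one_le₀ hp)
        · exact (ENNReal.sum_le_tsum s).trans hA
        · exact ENNReal.sum_le_tsum s)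
  calc (∑' i, w i * v i) ^ p ≤ (A ^ (1 - p⁻¹) * (∑' i, w i * v i ^ p) ^ p⁻¹) ^ p := by gcongr
    _ = A ^ (p - 1) * ∑' i, w i * v i ^ p := by
        rw [ENNReal.mul_rpow_of_nonneg _ _ hp0.le, ← ENNReal.rpow_mul, ← ENNReal.rpow_mul,
          inv_mul_cancel₀ hp0.ne', ENNReal.rpow_one, sub_mul, one_mul, inv_mul_cancel₀ hp0.ne']

theorem tsum_rpow_tsum_mul_le {ι κ : Type*} (K : ι → κ → ℝ≥0∞) (v : κ → ℝ≥0∞) {p : ℝ}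
    (hp : 1 ≤ p) {A B : ℝ≥0∞} (hrow : ∀ i, ∑' j, K i j ≤ A) (hcol : ∀ j, ∑' i, K i j ≤ B) :
    ∑' i, (∑' j, K i j * v j) ^ p ≤ A ^ (p - 1) * B * ∑' j, v j ^ p :=
  calc ∑' i, (∑' j, K i j * v j) ^ p ≤ ∑' i, A ^ (p - 1) * ∑' j, K i j * v j ^ p :=
        ENNReal.tsum_le_tsum fun i => tsum_mul_rpow_le (K i) v hp (hrow i)
    _ = A ^ (p - 1) * ∑' j, (∑' i, K i j) * v j ^ p := by
        rw [ENNReal.tsum_mul_left, ENNReal.tsum_comm]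
        simp_rw [ENNReal.tsum_mul_right]
    _ ≤ A ^ (p - 1) * ∑' j, B * v j ^ p := by gcongr with j; exact hcol j
    _ = A ^ (p - 1) * B * ∑' j, v j ^ p := by rw [ENNReal.tsum_mul_left, mul_assoc]

end ENNReal

theorem hardy_exponent_le (γ ε : ℝ) (m n : ℕ) :
    γ * m - γ * n - ε * ((m - n : ℕ) : ℝ) ≤ -min γ (ε - γ) * Nat.dist m n := by
  rcases le_total n m with h | h
  · rw [Nat.dist_eq_sub_of_le_right h, Nat.cast_sub h]
    nlinarith [min_le_right γ (ε - γ), (Nat.cast_le (α := ℝ)).2 h]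
  · rw [Nat.dist_eq_sub_of_le h, Nat.sub_eq_zero_of_le h, Nat.cast_sub h, Nat.cast_zero]
    nlinarith [min_le_left γ (ε - γ), (Nat.cast_le (α := ℝ)).2 h]

theorem two_rpow_hardy_exponent_le {ι : Type*} [Fintype ι] (γ ε : ℝ) (k s : ι → ℕ) :
    (2 : ℝ≥0∞) ^ (γ * ∑ i, (k i : ℝ) - γ * ∑ i, (s i : ℝ) - ε * ∑ i, ((k i - s i : ℕ) : ℝ)) ≤
      (2 ^ (-min γ (ε - γ))) ^ ∑ i, Nat.dist (k i) (s i) := by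
  rw [← ENNReal.rpow_natCast, ← ENNReal.rpow_mul]
  refine ENNReal.rpow_le_rpow_of_exponent_le one_le_two ?_
  simp only [mul_sum, ← sum_sub_distrib, Nat.cast_sum]
  exact sum_le_sum fun i _ => hardy_exponent_le γ ε (k i) (s i)

theorem tsum_rpow_hardy_le (d : ℕ) {γ ε p : ℝ} (hγ : 0 < γ) (hγε : γ < ε) (hp : 1 ≤ p) :
    ∃ C : ℝ≥0∞, C ≠ 0 ∧ C ≠ ⊤ ∧ ∀ u : (Fin d → ℕ) → ℝ≥0∞,
      ∑' k : Fin d → ℕ, ((2 : ℝ≥0∞) ^ (γ * ∑ i, (k i : ℝ)) *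
          ∑' s, 2 ^ (-ε * ∑ i, ((k i - s i : ℕ) : ℝ)) * u s) ^ p ≤
        C * ∑' k, (2 ^ (γ * ∑ i, (k i : ℝ)) * u k) ^ p := by
  set q : ℝ≥0∞ := 2 ^ (-min γ (ε - γ))
  have hq : q < 1 := ENNReal.rpow_lt_one_of_one_lt_of_neg ENNReal.one_lt_two
    (neg_lt_zero.2 (lt_min hγ (sub_pos.2 hγε)))
  set A : ℝ≥0∞ := (2 * (1 - q)⁻¹) ^ d
  have hA0 : A ≠ 0 := pow_ne_zero _ (mul_ne_zero two_ne_zero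
    (ENNReal.inv_ne_zero.2 (ENNReal.sub_ne_top ENNReal.one_ne_top)))
  have hAtop : A ≠ ⊤ := ENNReal.pow_ne_top (ENNReal.mul_ne_top ENNReal.ofNat_ne_top
    (ENNReal.inv_ne_top.2 (tsub_pos_iff_lt.2 hq).ne'))
  refine ⟨A ^ (p - 1) * A, mul_ne_zero (ENNReal.rpow_pos (pos_iff_ne_zero.2 hA0) hAtop).ne' hA0,
    ENNReal.mul_ne_top (ENNReal.rpow_ne_top_of_nonneg (sub_nonneg.2 hp) hAtop) hAtop, fun u => ?_⟩
  set K : (Fin d → ℕ) → (Fin d → ℕ) → ℝ≥0∞ := fun k s =>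
    2 ^ (γ * ∑ i, (k i : ℝ) - γ * ∑ i, (s i : ℝ) - ε * ∑ i, ((k i - s i : ℕ) : ℝ))
  have hrow (k) : ∑' s, K k s ≤ A :=
    (ENNReal.tsum_le_tsum fun s => two_rpow_hardy_exponent_le γ ε k s).trans
      (ENNReal.tsum_pow_sum_dist_le hq.le k)
  have hcol (s) : ∑' k, K k s ≤ A := by
    refine (ENNReal.tsum_le_tsum fun k => two_rpow_hardy_exponent_le γ ε k s).trans ?_
    simp_rw [Nat.dist_comm _ (s _)]
    exact ENNReal.tsum_pow_sum_dist_le hq.le s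
  have hconv (k) : (2 : ℝ≥0∞) ^ (γ * ∑ i, (k i : ℝ)) *
      ∑' s, 2 ^ (-ε * ∑ i, ((k i - s i : ℕ) : ℝ)) * u s =
        ∑' s, K k s * (2 ^ (γ * ∑ i, (s i : ℝ)) * u s) := by
    rw [← ENNReal.tsum_mul_left]
    refine tsum_congr fun s => ?_
    simp only [K, ← mul_assoc, ← ENNReal.rpow_add _ _ two_ne_zero ENNReal.ofNat_ne_top]
    ring_nf
  simp_rw [hconv]
  exact ENNReal.tsum_rpow_tsum_mul_le K _ hp hrow hcol

theorem tsum_rpow_mixed_hardy_le (d : ℕ) {δ β θ τ : ℝ} (hβ : 0 < β) (hβδ : β < δ) (hθ : 0 < θ)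
    (hτ : 0 < τ) :
    ∃ C : ℝ≥0∞, C ≠ 0 ∧ C ≠ ⊤ ∧ ∀ u : (Fin d → ℕ) → ℝ≥0∞,
      ∑' k : Fin d → ℕ, ((2 : ℝ≥0∞) ^ (β * ∑ i, (k i : ℝ)) *
          (∑' s, (2 ^ (-δ * ∑ i, ((k i - s i : ℕ) : ℝ)) * u s) ^ τ) ^ (1 / τ)) ^ θ ≤
        C * ∑' k, (2 ^ (β * ∑ i, (k i : ℝ)) * u k) ^ θ := by
  set ρ := min τ θ
  have hρ : 0 < ρ := lt_min hτ hθ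
  obtain ⟨C, hC0, hCtop, hardy⟩ := tsum_rpow_hardy_le d (γ := β * ρ) (ε := δ * ρ) (p := θ / ρ)
    (mul_pos hβ hρ) (mul_lt_mul_of_pos_right hβδ hρ) ((one_le_div hρ).2 (min_le_right τ θ))
  refine ⟨C, hC0, hCtop, fun u => ?_⟩
  have hpow (x : ℝ≥0∞) : x ^ θ = (x ^ ρ) ^ (θ / ρ) := by
    rw [← ENNReal.rpow_mul, mul_div_cancel₀ θ hρ.ne']
  have hmul (x y : ℝ) (v : ℝ≥0∞) : ((2 : ℝ≥0∞) ^ (x * y) * v) ^ ρ = 2 ^ (x * ρ * y) * v ^ ρ := by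
    rw [ENNReal.mul_rpow_of_nonneg _ _ hρ.le, ← ENNReal.rpow_mul, mul_right_comm]
  calc _ ≤ ∑' k : Fin d → ℕ, ((2 : ℝ≥0∞) ^ (β * ∑ i, (k i : ℝ)) *
          (∑' s, (2 ^ (-δ * ∑ i, ((k i - s i : ℕ) : ℝ)) * u s) ^ ρ) ^ (1 / ρ)) ^ θ := by
        gcongr
        exact ENNReal.tsum_rpow_rpow_le _ hρ (min_le_left τ θ)
    _ = ∑' k : Fin d → ℕ, ((2 : ℝ≥0∞) ^ (β * ρ * ∑ i, (k i : ℝ)) *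
          ∑' s, 2 ^ (-(δ * ρ) * ∑ i, ((k i - s i : ℕ) : ℝ)) * u s ^ ρ) ^ (θ / ρ) := by
        refine tsum_congr fun k => ?_
        rw [hpow, hmul, ← ENNReal.rpow_mul, one_div_mul_cancel hρ.ne', ENNReal.rpow_one]
        simp_rw [hmul, neg_mul]
    _ ≤ C * ∑' k : Fin d → ℕ, (2 ^ (β * ρ * ∑ i, (k i : ℝ)) * u k ^ ρ) ^ (θ / ρ) := hardy _
    _ = C * ∑' k : Fin d → ℕ, (2 ^ (β * ∑ i, (k i : ℝ)) * u k) ^ θ := by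
        simp_rw [hpow (_ * u _), hmul]

namespace ENNReal

theorem ofReal_tsum_le {α : Type*} {f : α → ℝ} (hf : ∀ a, 0 ≤ f a) :
    ENNReal.ofReal (∑' a, f a) ≤ ∑' a, ENNReal.ofReal (f a) := by
  by_cases hs : Summable f
  · exact (ENNReal.ofReal_tsum_of_nonneg hf hs).le
  · simp [tsum_eq_zero_of_not_summable hs]

theorem ofReal_two_rpow_mul_rpow (x : ℝ) {y θ : ℝ} (hy : 0 ≤ y) (hθ : 0 ≤ θ) :
    ENNReal.ofReal (((2 : ℝ) ^ x * y) ^ θ) = ((2 : ℝ≥0∞) ^ x * ENNReal.ofReal y) ^ θ := by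
  rw [← ENNReal.ofReal_rpow_of_nonneg (by positivity) hθ, ENNReal.ofReal_mul (by positivity),
    ← ENNReal.ofReal_rpow_of_pos two_pos, ENNReal.ofReal_ofNat]

theorem ofReal_le_mul_tsum_rpow_of_le {α : Type*} (x : α → ℝ) {y : α → ℝ}
    (hy : ∀ a, 0 ≤ y a) {τ M b : ℝ} (hτ : 0 < τ) (hM : 0 ≤ M)
    (h : b ≤ M * (∑' a, ((2 : ℝ) ^ x a * y a) ^ τ) ^ (1 / τ)) :
    ENNReal.ofReal b ≤
      ENNReal.ofReal M * (∑' a, ((2 : ℝ≥0∞) ^ x a * ENNReal.ofReal (y a)) ^ τ) ^ (1 / τ) := by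
  have hterm (a : α) : 0 ≤ ((2 : ℝ) ^ x a * y a) ^ τ := by have := hy a; positivity
  refine (ENNReal.ofReal_le_ofReal h).trans ?_
  rw [ENNReal.ofReal_mul hM, ← ENNReal.ofReal_rpow_of_nonneg (tsum_nonneg hterm) (by positivity)]
  gcongr
  refine (ofReal_tsum_le hterm).trans_eq (tsum_congr fun a => ?_)
  exact ofReal_two_rpow_mul_rpow _ (hy a) hτ.le

end ENNReal

theorem tsum_le_toReal_mul_tsum_of_ofReal_le {α : Type*} {f g : α → ℝ} (hf : ∀ a, 0 ≤ f a)
    (hg : ∀ a, 0 ≤ g a) (hgs : Summable g) {c : ℝ≥0∞} (hc : c ≠ ⊤)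
    (h : ∑' a, ENNReal.ofReal (f a) ≤ c * ∑' a, ENNReal.ofReal (g a)) :
    ∑' a, f a ≤ c.toReal * ∑' a, g a := by
  rw [← ENNReal.ofReal_tsum_of_nonneg hg hgs] at h
  have := ENNReal.toReal_mono (ENNReal.mul_ne_top hc ENNReal.ofReal_ne_top) h
  rwa [ENNReal.toReal_mul, ENNReal.toReal_ofReal (tsum_nonneg hg),
    ENNReal.tsum_toReal_eq fun _ => ENNReal.ofReal_ne_top,
    tsum_congr fun a => ENNReal.toReal_ofReal (hf a)] at this

theorem tsum_rpow_one_div_le_of_ofReal_le {α : Type*} {f g : α → ℝ} (hf : ∀ a, 0 ≤ f a)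
    (hg : ∀ a, 0 ≤ g a) (hgs : Summable g) {c : ℝ≥0∞} (hc : c ≠ ⊤) {M θ : ℝ} (hM : 0 ≤ M)
    (hθ : 0 < θ)
    (h : ∑' a, ENNReal.ofReal (f a) ≤ ENNReal.ofReal M ^ θ * (c * ∑' a, ENNReal.ofReal (g a))) :
    (∑' a, f a) ^ (1 / θ) ≤ c.toReal ^ (1 / θ) * M * (∑' a, g a) ^ (1 / θ) := by
  rw [← mul_assoc] at h
  calc (∑' a, f a) ^ (1 / θ) ≤ ((ENNReal.ofReal M ^ θ * c).toReal * ∑' a, g a) ^ (1 / θ) := by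
        gcongr
        exacts [tsum_nonneg hf, tsum_le_toReal_mul_tsum_of_ofReal_le hf hg hgs (by finiteness) h]
    _ = c.toReal ^ (1 / θ) * M * (∑' a, g a) ^ (1 / θ) := by
        rw [ENNReal.toReal_mul, ← ENNReal.toReal_rpow, ENNReal.toReal_ofReal hM,
          Real.mul_rpow (by positivity) (tsum_nonneg hg),
          Real.mul_rpow (by positivity) ENNReal.toReal_nonneg, one_div,
          Real.rpow_rpow_inv hM hθ.ne', mul_comm M]

theorem mixed_discrete_hardy_general (d : ℕ) (δ β θ τ : ℝ) (hβ : 0 < β)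
    (hβδ : β < δ) (hθ : 0 < θ) (hτ : 0 < τ) :
    ∃ C : ℝ, 0 < C ∧ ∀ (M : ℝ) (a b : (Fin d → ℕ) → ℝ),
      0 ≤ M → (∀ k, 0 ≤ a k) → (∀ k, 0 ≤ b k) →
      (∀ k, b k ≤ M * (∑' s : Fin d → ℕ,
          ((2 : ℝ) ^ (-δ * ∑ i, ((k i - s i : ℕ) : ℝ)) * a s) ^ τ) ^ (1 / τ)) →
      Summable (fun k : Fin d → ℕ => ((2 : ℝ) ^ (β * ∑ i, (k i : ℝ)) * a k) ^ θ) →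
      (∑' k : Fin d → ℕ, ((2 : ℝ) ^ (β * ∑ i, (k i : ℝ)) * b k) ^ θ) ^ (1 / θ) ≤
        C * M * (∑' k : Fin d → ℕ, ((2 : ℝ) ^ (β * ∑ i, (k i : ℝ)) * a k) ^ θ) ^ (1 / θ) := by
  obtain ⟨C, hC0, hCtop, hardy⟩ := tsum_rpow_mixed_hardy_le d hβ hβδ hθ hτ
  refine ⟨C.toReal ^ (1 / θ), Real.rpow_pos_of_pos (ENNReal.toReal_pos hC0 hCtop) _,
    fun M a b hM ha hb hba hsum => ?_⟩
  refine tsum_rpow_one_div_le_of_ofReal_le (fun k => by have := hb k; positivity)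
    (fun k => by have := ha k; positivity) hsum hCtop hM hθ ?_
  simp_rw [ENNReal.ofReal_two_rpow_mul_rpow _ (hb _) hθ.le,
    ENNReal.ofReal_two_rpow_mul_rpow _ (ha _) hθ.le]
  refine le_trans ?_ (mul_le_mul_right (hardy _) _)
  rw [← ENNReal.tsum_mul_left]
  refine ENNReal.tsum_le_tsum fun k => ?_
  rw [← ENNReal.mul_rpow_of_nonneg _ _ hθ.le, mul_left_comm]
  exact ENNReal.rpow_le_rpow (mul_le_mul_right
    (ENNReal.ofReal_le_mul_tsum_rpow_of_le _ ha hτ hM (hba k)) _) hθ.le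

/-- Mixed (d-dimensional) discrete Hardy inequality with kernel `2^{-δ|(k-s)_+|_1}`. -/
theorem mixed_discrete_hardy (d : ℕ) (δ β θ τ : ℝ) (hδ : 0 < δ) (hβ : 0 < β)
    (hβδ : β < δ) (hθ : 0 < θ) (hτ : 0 < τ) :
    ∃ C : ℝ, 0 < C ∧ ∀ (M : ℝ) (a b : (Fin d → ℕ) → ℝ),
      0 ≤ M → (∀ k, 0 ≤ a k) → (∀ k, 0 ≤ b k) →
      (∀ k, b k ≤ M * (∑' s : Fin d → ℕ,
          ((2 : ℝ) ^ (-δ * ∑ i, ((k i - s i : ℕ) : ℝ)) * a s) ^ τ) ^ (1 / τ)) →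
      Summable (fun k : Fin d → ℕ => ((2 : ℝ) ^ (β * ∑ i, (k i : ℝ)) * a k) ^ θ) →
      (∑' k : Fin d → ℕ, ((2 : ℝ) ^ (β * ∑ i, (k i : ℝ)) * b k) ^ θ) ^ (1 / θ) ≤
        C * M * (∑' k : Fin d → ℕ, ((2 : ℝ) ^ (β * ∑ i, (k i : ℝ)) * a k) ^ θ) ^ (1 / θ) :=
  mixed_discrete_hardy_general d δ β θ τ hβ hβδ hθ hτ
end

section
/- Let M(x) = max(1-|x|,0) be the hat function and for k ∈ ℤ_+ let Q_k(f)(x) = ∑_{s=0}^{2^k} f(2^{-k}s) M(2^k x - s) be the piecewise linear interpolant of f : [0,1] → ℝ. Then for every continuous f on [0,1] and every x ∈ [0,1], |f(x) - Q_k(f)(x)| ≤ ω_2(f, 2^{-k}), where ω_2(f,t) = sup_{0<h≤t} sup{|f(y) - 2f(y+h) + f(y+2h)| : y, y+2h ∈ [0,1]} is the second modulus of smoothness. -/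
/-!
On a cell `[a, b]` the error `g = f - ℓ` of the linear interpolant `ℓ` vanishes at both ends and
has the same second differences as `f`. At a point `z` where `|g|` is maximal, the second
difference centred at `z` whose step reaches the nearer endpoint reads `g w - 2 g z` with
`|g w| ≤ |g z|`, hence `|g z| ≤ ω₂(f, b - a)`. The interpolant with step `1/N` coincides with
`ℓ` on the cell containing `x`.
-/

/-- The second modulus of smoothness in the sup norm on `[0,1]`. -/
noncomputable def omega2 (f : ℝ → ℝ) (t : ℝ) : ℝ :=
  sSup {v | ∃ h y : ℝ, 0 < h ∧ h ≤ t ∧ 0 ≤ y ∧ y + 2 * h ≤ 1 ∧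
    v = |f y - 2 * f (y + h) + f (y + 2 * h)|}

open Set Finset

lemma omega2_nonneg (f : ℝ → ℝ) (t : ℝ) : 0 ≤ omega2 f t :=
  Real.sSup_nonneg <| by
    rintro _ ⟨h, y, -, -, -, -, rfl⟩
    exact abs_nonneg _

lemma abs_secondDiff_le_omega2 {f : ℝ → ℝ} (hf : ContinuousOn f (Icc 0 1)) {t h y : ℝ}
    (hh : 0 < h) (ht : h ≤ t) (hy : 0 ≤ y) (hy2 : y + 2 * h ≤ 1) :
    |f y - 2 * f (y + h) + f (y + 2 * h)| ≤ omega2 f t := by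
  obtain ⟨C, hC⟩ := isCompact_Icc.exists_bound_of_continuousOn hf
  have hbound : ∀ z ∈ Icc (0 : ℝ) 1, |f z| ≤ C := hC
  refine le_csSup ⟨4 * C, ?_⟩ ⟨h, y, hh, ht, hy, hy2, rfl⟩
  rintro _ ⟨h, y, hh, -, hy, hy2, rfl⟩
  have b₀ := abs_le.mp (hbound y ⟨hy, by linarith⟩)
  have b₁ := abs_le.mp (hbound (y + h) ⟨by linarith, by linarith⟩)
  have b₂ := abs_le.mp (hbound (y + 2 * h) ⟨by linarith, hy2⟩)
  exact abs_le.mpr ⟨by linarith, by linarith⟩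

lemma abs_le_of_abs_secondDiff_le {g : ℝ → ℝ} {a b M x : ℝ} (hg : ContinuousOn g (Icc a b))
    (ha : g a = 0) (hb : g b = 0) (hM0 : 0 ≤ M)
    (hM : ∀ y h, 0 < h → a ≤ y → y + 2 * h ≤ b → |g y - 2 * g (y + h) + g (y + 2 * h)| ≤ M)
    (hx : x ∈ Icc a b) : |g x| ≤ M := by
  obtain ⟨z, hz, hmax⟩ := isCompact_Icc.exists_isMaxOn ⟨x, hx⟩ hg.abs
  have hle_max : ∀ w ∈ Icc a b, |g w| ≤ |g z| := hmax
  refine (hle_max x hx).trans ?_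
  have centred : ∀ h, 0 < h → a ≤ z - h → z + h ≤ b → g (z - h) = 0 ∨ g (z + h) = 0 →
      |g z| ≤ M := by
    intro h hh hzh hzh' hzero
    have hsd := hM (z - h) h hh hzh (by linarith)
    rw [sub_add_cancel, show z - h + 2 * h = z + h by ring] at hsd
    have h2 : |2 * g z| = 2 * |g z| := by rw [abs_mul, abs_two]
    rcases hzero with h0 | h0
    · have hw := hle_max (z + h) ⟨by linarith, hzh'⟩
      have htri := abs_sub_abs_le_abs_sub (2 * g z) (g (z + h))
      have e : |2 * g z - g (z + h)| = |g (z - h) - 2 * g z + g (z + h)| := by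
        rw [h0, abs_sub_comm]; ring_nf
      linarith
    · have hw := hle_max (z - h) ⟨hzh, by linarith⟩
      have htri := abs_sub_abs_le_abs_sub (2 * g z) (g (z - h))
      have e : |2 * g z - g (z - h)| = |g (z - h) - 2 * g z + g (z + h)| := by
        rw [h0, abs_sub_comm]; ring_nf
      linarith
  rcases hz.1.eq_or_lt with hza | hza
  · rw [← hza, ha, abs_zero]; exact hM0
  rcases hz.2.eq_or_lt with hzb | hzb
  · rw [hzb, hb, abs_zero]; exact hM0
  rcases le_total (z - a) (b - z) with hnear | hnear
  · exact centred (z - a) (by linarith) (by linarith) (by linarith)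
      (Or.inl (by rw [sub_sub_cancel, ha]))
  · exact centred (b - z) (by linarith) (by linarith) (by linarith)
      (Or.inr (by rw [add_sub_cancel, hb]))

lemma abs_sub_lineInterp_le_omega2 {f : ℝ → ℝ} (hf : ContinuousOn f (Icc 0 1)) {a b x : ℝ}
    (ha : 0 ≤ a) (hab : a < b) (hb : b ≤ 1) (hx : x ∈ Icc a b) :
    |f x - (f a + (x - a) * ((f b - f a) / (b - a)))| ≤ omega2 f (b - a) := by
  set g : ℝ → ℝ := fun y => f y - (f a + (y - a) * ((f b - f a) / (b - a)))
  refine abs_le_of_abs_secondDiff_le (g := g) ?_ (by simp [g]) ?_ (omega2_nonneg f _) ?_ hx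
  · exact (hf.mono (Icc_subset_Icc ha hb)).sub (by fun_prop)
  · simp only [g]
    rw [mul_div_cancel₀ _ (sub_ne_zero.2 hab.ne')]
    ring
  · intro y h hh hy hyh
    have hsame : g y - 2 * g (y + h) + g (y + 2 * h) = f y - 2 * f (y + h) + f (y + 2 * h) := by
      simp only [g]; ring
    rw [hsame]
    exact abs_secondDiff_le_omega2 hf hh (by linarith) (by linarith) (by linarith)

lemma exists_nat_cell {N : ℕ} (hN : 0 < N) {u : ℝ} (hu0 : 0 ≤ u) (huN : u ≤ N) :
    ∃ s : ℕ, s + 1 ≤ N ∧ (s : ℝ) ≤ u ∧ u ≤ s + 1 := by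
  rcases huN.lt_or_eq with hlt | rfl
  · exact ⟨⌊u⌋₊, (Nat.floor_lt hu0).2 hlt, Nat.floor_le hu0, (Nat.lt_floor_add_one u).le⟩
  · refine ⟨N - 1, by omega, ?_, ?_⟩ <;> rw [Nat.cast_pred hN] <;> linarith

lemma sum_mul_hat_eq {N s : ℕ} (v : ℕ → ℝ) {u : ℝ} (hsN : s + 1 ≤ N) (hs : (s : ℝ) ≤ u)
    (hs1 : u ≤ s + 1) :
    ∑ i ∈ range (N + 1), v i * max (1 - |u - i|) 0 = v s * (1 - (u - s)) + v (s + 1) * (u - s) := by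
  have hat_left : max (1 - |u - s|) 0 = 1 - (u - s) := by
    rw [abs_of_nonneg (by linarith)]; exact max_eq_left (by linarith)
  have hat_right : max (1 - |u - ↑(s + 1)|) 0 = u - s := by
    rw [Nat.cast_succ, abs_of_nonpos (show u - (s + 1) ≤ 0 by linarith),
      show 1 - -(u - (s + 1)) = u - s by ring]
    exact max_eq_left (by linarith)
  rw [sum_eq_add_of_mem s (s + 1) (by simp; omega) (by simp; omega) (by omega), hat_left,
    hat_right]
  rintro i - ⟨his, his'⟩
  suffices 1 ≤ |u - i| by rw [max_eq_right (by linarith), mul_zero]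
  rcases Nat.lt_or_ge i s with hi | hi
  · have : (i : ℝ) + 1 ≤ s := by exact_mod_cast hi
    exact le_abs.2 (Or.inl (by linarith))
  · have : (s : ℝ) + 2 ≤ i := by exact_mod_cast (show s + 2 ≤ i by omega)
    exact le_abs.2 (Or.inr (by linarith))

theorem abs_sub_interpolant_le_omega2 {f : ℝ → ℝ} (hf : ContinuousOn f (Icc 0 1)) {N : ℕ}
    (hN : 0 < N) {x : ℝ} (hx : x ∈ Icc (0 : ℝ) 1) :
    |f x - ∑ s ∈ range (N + 1), f ((s : ℝ) / N) * max (1 - |(N : ℝ) * x - s|) 0|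
      ≤ omega2 f (N : ℝ)⁻¹ := by
  have hN' : (0 : ℝ) < N := by exact_mod_cast hN
  obtain ⟨s, hsN, hs, hs1⟩ := exists_nat_cell hN (u := N * x) (by nlinarith [hx.1])
    (by nlinarith [hx.2])
  have hsN' : (s : ℝ) + 1 ≤ N := by exact_mod_cast hsN
  have hcell := abs_sub_lineInterp_le_omega2 hf (a := s / N) (b := (s + 1) / N) (x := x)
    (by positivity) (by gcongr; linarith) ((div_le_one hN').2 hsN')
    ⟨(div_le_iff₀ hN').2 (by linarith), (le_div_iff₀ hN').2 (by linarith)⟩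
  have hstep : ((s : ℝ) + 1) / N - s / N = (N : ℝ)⁻¹ := by field_simp; ring
  rw [hstep] at hcell
  convert hcell using 3
  rw [sum_mul_hat_eq (fun i => f (i / N)) hsN hs hs1]
  field_simp
  push_cast
  ring

/-- The piecewise linear interpolant at step `2^{-k}` approximates a continuous `f`
within `ω₂(f, 2^{-k})` on `[0,1]`. -/
theorem piecewise_linear_interpolant_error (f : ℝ → ℝ)
    (hf : ContinuousOn f (Set.Icc 0 1)) (k : ℕ) (x : ℝ) (hx : x ∈ Set.Icc (0 : ℝ) 1) :
    |f x - ∑ s ∈ Finset.range (2 ^ k + 1),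
        f ((s : ℝ) / 2 ^ k) * max (1 - |(2 : ℝ) ^ k * x - s|) 0|
      ≤ omega2 f (((2 : ℝ) ^ k)⁻¹) := by
  simpa using abs_sub_interpolant_le_omega2 hf (N := 2 ^ k) (by positivity) hx
end
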